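/- arXiv:2509.04025 — 3 statements merged into one kernel-verified Lean document; each statement's English description precedes it below -/
import Mathlib

section
/- For the boost A_φ and any (t,x) ∈ ℝ_{≥0} × ℝ³, one has (1/√2)(cosh φ - |sinh φ|)(t + |x|) ≤ A⁰_φ(t,x) + |Aˢ_φ(t,x)| ≤ (cosh φ + |sinh φ|)(t + |x|), where A⁰_φ, Aˢ_φ denote time and spatial components of A_φ(t,x). -/
/-!
The lower bound is Lorentz invariance of the Minkowski pairing with the null vector `(|x|, -x)`:
its boost `(μ, -w)` is again null with `μ = cosh φ |x| - sinh φ x₀ ≥ 0`, so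
`|x| (t + |x|) = μ T + w ⬝ y ≤ μ (T + |y|)` by Cauchy–Schwarz, where `(T, y)` is the boosted point,
and `μ ≤ (cosh φ + |sinh φ|) |x|`. Since `(cosh φ - |sinh φ|) (cosh φ + |sinh φ|) = 1` this gives
the bound with constant `1` in place of `1 / √2`. The upper bound is the triangle inequality.
-/

noncomputable def boost (φ : ℝ) : Matrix (Fin 4) (Fin 4) ℝ :=
  !![Real.cosh φ, Real.sinh φ, 0, 0;
     Real.sinh φ, Real.cosh φ, 0, 0;
     0, 0, 1, 0;
     0, 0, 0, 1]

open Real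

theorem boost_mulVec (φ t u v w : ℝ) :
    (boost φ).mulVec ![t, u, v, w] =
      ![cosh φ * t + sinh φ * u, sinh φ * t + cosh φ * u, v, w] := by
  ext i
  fin_cases i <;> simp [boost, Matrix.mulVec, dotProduct, Fin.sum_univ_four]

theorem abs_sinh_le_cosh (φ : ℝ) : |sinh φ| ≤ cosh φ :=
  abs_le_of_sq_le_sq (by linarith [cosh_sq φ]) (cosh_pos φ).le

theorem mul_add_le_sqrt_mul_sqrt (a b : ℝ) {p : ℝ} (hp : 0 ≤ p) :
    a * b + p ≤ √(a ^ 2 + p) * √(b ^ 2 + p) := by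
  rw [← sqrt_mul (by positivity)]
  refine (le_abs_self _).trans (abs_le_sqrt ?_)
  nlinarith [sq_nonneg (a - b)]

theorem abs_mul_le_mul_sqrt (s u : ℝ) {p : ℝ} (hp : 0 ≤ p) :
    |s * u| ≤ |s| * √(u ^ 2 + p) := by
  rw [abs_mul]
  exact mul_le_mul_of_nonneg_left (abs_le_sqrt (by linarith)) (abs_nonneg s)

section BoostBounds

variable (φ u : ℝ) {t p : ℝ}

theorem boost_time_add_norm_le (ht : 0 ≤ t) (hp : 0 ≤ p) :
    (cosh φ * t + sinh φ * u) + √((sinh φ * t + cosh φ * u) ^ 2 + p) ≤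
      (cosh φ + |sinh φ|) * (t + √(u ^ 2 + p)) := by
  have hsu := abs_mul_le_mul_sqrt (sinh φ) u hp
  have hN := sq_sqrt (by positivity : 0 ≤ u ^ 2 + p)
  have hspace : √((sinh φ * t + cosh φ * u) ^ 2 + p) ≤ |sinh φ| * t + cosh φ * √(u ^ 2 + p) := by
    refine sqrt_le_iff.mpr ⟨by positivity, ?_⟩
    have hgap : (|sinh φ| * t + cosh φ * √(u ^ 2 + p)) ^ 2 - ((sinh φ * t + cosh φ * u) ^ 2 + p) =
        2 * cosh φ * t * (|sinh φ| * √(u ^ 2 + p) - sinh φ * u) + sinh φ ^ 2 * p := by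
      linear_combination t ^ 2 * sq_abs (sinh φ) + cosh φ ^ 2 * hN + p * cosh_sq φ
    have hdrift : 0 ≤ 2 * cosh φ * t * (|sinh φ| * √(u ^ 2 + p) - sinh φ * u) :=
      mul_nonneg (by have := cosh_pos φ; positivity)
        (sub_nonneg.mpr ((le_abs_self (sinh φ * u)).trans hsu))
    nlinarith [mul_nonneg (sq_nonneg (sinh φ)) hp]
  linarith [le_abs_self (sinh φ * u)]

theorem sinh_mul_le_cosh_mul_sqrt (hp : 0 ≤ p) : sinh φ * u ≤ cosh φ * √(u ^ 2 + p) :=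
  (le_abs_self _).trans <| (abs_mul_le_mul_sqrt (sinh φ) u hp).trans <|
    mul_le_mul_of_nonneg_right (abs_sinh_le_cosh φ) (sqrt_nonneg _)

theorem sqrt_mul_add_sqrt_le_boost (hp : 0 ≤ p) :
    √(u ^ 2 + p) * (t + √(u ^ 2 + p)) ≤
      (cosh φ * √(u ^ 2 + p) - sinh φ * u) *
        ((cosh φ * t + sinh φ * u) + √((sinh φ * t + cosh φ * u) ^ 2 + p)) := by
  set N := √(u ^ 2 + p)
  have hN : N ^ 2 = u ^ 2 + p := sq_sqrt (by positivity)
  have hμ : 0 ≤ cosh φ * N - sinh φ * u := sub_nonneg.mpr (sinh_mul_le_cosh_mul_sqrt φ u hp)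
  have hnull : √((cosh φ * u - sinh φ * N) ^ 2 + p) = cosh φ * N - sinh φ * u := by
    rw [show (cosh φ * u - sinh φ * N) ^ 2 + p = (cosh φ * N - sinh φ * u) ^ 2 by
      linear_combination (u ^ 2 - N ^ 2) * cosh_sq φ - hN]
    exact sqrt_sq hμ
  have hinvariance : (cosh φ * N - sinh φ * u) * (cosh φ * t + sinh φ * u) +
      ((cosh φ * u - sinh φ * N) * (sinh φ * t + cosh φ * u) + p) = N * (t + N) := by
    linear_combination (N * t + u ^ 2) * cosh_sq φ - hN
  have hcs := mul_add_le_sqrt_mul_sqrt (cosh φ * u - sinh φ * N) (sinh φ * t + cosh φ * u) hp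
  rw [hnull] at hcs
  linarith

theorem le_boost_time_add_norm (ht : 0 ≤ t) (hp : 0 ≤ p) :
    (cosh φ - |sinh φ|) * (t + √(u ^ 2 + p)) ≤
      (cosh φ * t + sinh φ * u) + √((sinh φ * t + cosh φ * u) ^ 2 + p) := by
  have hcs : (cosh φ - |sinh φ|) * (cosh φ + |sinh φ|) = 1 := by
    linear_combination cosh_sq φ - sq_abs (sinh φ)
  rcases (sqrt_nonneg (u ^ 2 + p)).eq_or_lt with hN | hN
  · obtain ⟨rfl, rfl⟩ : u = 0 ∧ p = 0 := by
      have := sqrt_eq_zero'.mp hN.symm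
      constructor <;> nlinarith [sq_nonneg u]
    norm_num [sqrt_sq_eq_abs, abs_mul, abs_of_nonneg ht]
    nlinarith [abs_nonneg (sinh φ)]
  · set N := √(u ^ 2 + p)
    have hμ : cosh φ * N - sinh φ * u ≤ (cosh φ + |sinh φ|) * N := by
      linarith [neg_abs_le (sinh φ * u), abs_mul_le_mul_sqrt (sinh φ) u hp]
    set B := (cosh φ * t + sinh φ * u) + √((sinh φ * t + cosh φ * u) ^ 2 + p)
    have hpair : N * (t + N) ≤ (cosh φ * N - sinh φ * u) * B := sqrt_mul_add_sqrt_le_boost φ u hp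
    have hB : 0 < B := pos_of_mul_pos_right (lt_of_lt_of_le (by positivity) hpair)
      (sub_nonneg.mpr (sinh_mul_le_cosh_mul_sqrt φ u hp))
    refine le_of_mul_le_mul_left ?_ hN
    calc N * ((cosh φ - |sinh φ|) * (t + N))
        = (cosh φ - |sinh φ|) * (N * (t + N)) := by ring
      _ ≤ (cosh φ - |sinh φ|) * ((cosh φ + |sinh φ|) * N * B) := by
        refine mul_le_mul_of_nonneg_left ?_ (sub_nonneg.mpr (abs_sinh_le_cosh φ))
        exact hpair.trans (mul_le_mul_of_nonneg_right hμ hB.le)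
      _ = N * B := by linear_combination N * B * hcs

end BoostBounds

theorem boost_null_coordinate_bounds (φ : ℝ) (t : ℝ) (ht : 0 ≤ t) (x : Fin 3 → ℝ) :
    let X : Fin 4 → ℝ := ![t, x 0, x 1, x 2]
    let X' : Fin 4 → ℝ := (boost φ).mulVec X
    let normx : ℝ := Real.sqrt ((x 0) ^ 2 + (x 1) ^ 2 + (x 2) ^ 2)
    let normx' : ℝ := Real.sqrt ((X' 1) ^ 2 + (X' 2) ^ 2 + (X' 3) ^ 2)
    (1 / Real.sqrt 2) * (Real.cosh φ - |Real.sinh φ|) * (t + normx) ≤ X' 0 + normx' ∧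
    X' 0 + normx' ≤ (Real.cosh φ + |Real.sinh φ|) * (t + normx) := by
  intro X X' normx normx'
  have hp : 0 ≤ x 1 ^ 2 + x 2 ^ 2 := by positivity
  simp only [normx', normx, X', X, boost_mulVec, Matrix.cons_val, add_assoc _ (x 1 ^ 2)]
  refine ⟨?_, boost_time_add_norm_le φ (x 0) ht hp⟩
  have hc : 0 ≤ (cosh φ - |sinh φ|) * (t + √(x 0 ^ 2 + (x 1 ^ 2 + x 2 ^ 2))) :=
    mul_nonneg (sub_nonneg.mpr (abs_sinh_le_cosh φ)) (by positivity)
  calc 1 / √2 * (cosh φ - |sinh φ|) * (t + √(x 0 ^ 2 + (x 1 ^ 2 + x 2 ^ 2)))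
      ≤ (cosh φ - |sinh φ|) * (t + √(x 0 ^ 2 + (x 1 ^ 2 + x 2 ^ 2))) := by
        rw [mul_assoc]
        exact mul_le_of_le_one_left hc (by rw [div_le_one (by positivity)]; exact one_le_sqrt.mpr one_le_two)
    _ ≤ _ := le_boost_time_add_norm φ (x 0) ht hp
end

section
/- Every element A of the restricted Lorentz group SO₀(3,1) can be written as A = R₁ · A_φ · R₂ for some rapidity φ ∈ ℝ and spatial rotations R₁, R₂ (i.e. block-diagonal matrices diag(1, R̃ᵢ) with R̃ᵢ ∈ SO(3)). -/
/-!
The first column of `A` is a future-pointing unit timelike vector, hence of the form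
`(cosh φ, sinh φ • u)` with `u` a spatial unit vector. For a rotation `R₁` sending the first
spatial axis to `u`, the proper Lorentz transformation `M = diag(1, R₁) * A_φ` has the same first
column as `A`, so `M⁻¹ * A = η * Mᵀ * η * A` is a Lorentz transformation fixing the time axis.
Such a transformation is `diag(1, R₂)` with `R₂` orthogonal, and `det R₂ = det A = 1`.
-/

open Matrix

noncomputable def η : Matrix (Unit ⊕ Fin 3) (Unit ⊕ Fin 3) ℝ :=
  Matrix.fromBlocks (-1) 0 0 1

/-- The boost of rapidity `φ` in the first spatial coordinate, written with
index type `Unit ⊕ Fin 3`. -/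
noncomputable def boostS (φ : ℝ) : Matrix (Unit ⊕ Fin 3) (Unit ⊕ Fin 3) ℝ :=
  Matrix.of fun i j =>
    match i, j with
    | .inl _, .inl _ => Real.cosh φ
    | .inl _, .inr k => if k = 0 then Real.sinh φ else 0
    | .inr k, .inl _ => if k = 0 then Real.sinh φ else 0
    | .inr k, .inr l => if k = 0 ∧ l = 0 then Real.cosh φ else if k = l then 1 else 0

def Matrix.PreservesForm {n R : Type*} [Fintype n] [CommRing R] (J M : Matrix n n R) : Prop :=
  Mᵀ * J * M = J

namespace Matrix.PreservesForm

variable {n R : Type*} [Fintype n] [CommRing R] {J M N : Matrix n n R}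

theorem mul (hM : PreservesForm J M) (hN : PreservesForm J N) : PreservesForm J (M * N) := by
  rw [PreservesForm, transpose_mul, show Nᵀ * Mᵀ * J * (M * N) = Nᵀ * (Mᵀ * J * M) * N by
    simp only [Matrix.mul_assoc], hM, hN]

theorem of_mul (hM : PreservesForm J M) (hMN : PreservesForm J (M * N)) : PreservesForm J N := by
  rwa [PreservesForm, transpose_mul, show Nᵀ * Mᵀ * J * (M * N) = Nᵀ * (Mᵀ * J * M) * N by
    simp only [Matrix.mul_assoc], hM] at hMN

theorem mul_mul_transpose_mul_eq_one [DecidableEq n] (hJ : J * J = 1) (hM : PreservesForm J M) :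
    M * (J * Mᵀ * J) = 1 :=
  mul_eq_one_comm.mp <| by
    rw [Matrix.mul_assoc, Matrix.mul_assoc, ← Matrix.mul_assoc Mᵀ, hM, hJ]

theorem det_sq_eq_one [DecidableEq n] (hJ : IsUnit J.det) (hM : PreservesForm J M) :
    M.det ^ 2 = 1 := by
  have h := congrArg det hM
  rw [det_mul, det_mul, det_transpose] at h
  exact hJ.mul_left_inj.mp (by linear_combination h)

end Matrix.PreservesForm

def minkowski (n R : Type*) [DecidableEq n] [CommRing R] : Matrix (Unit ⊕ n) (Unit ⊕ n) R :=
  fromBlocks (-1) 0 0 1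

section Minkowski

variable {n R : Type*} [Fintype n] [DecidableEq n] [CommRing R]

theorem minkowski_mul_self : minkowski n R * minkowski n R = 1 := by
  simp [minkowski, fromBlocks_multiply, fromBlocks_one]

theorem preservesForm_minkowski_fromBlocks {Q : Matrix n n R} (hQ : Qᵀ * Q = 1) :
    PreservesForm (minkowski n R) (fromBlocks 1 0 0 Q) := by
  simp [PreservesForm, minkowski, fromBlocks_transpose, fromBlocks_multiply, hQ]

theorem Matrix.PreservesForm.apply_inl_inl_sq {A : Matrix (Unit ⊕ n) (Unit ⊕ n) R}
    (hA : PreservesForm (minkowski n R) A) :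
    A (.inl ()) (.inl ()) ^ 2 = 1 + ∑ i, A (.inr i) (.inl ()) ^ 2 := by
  have h := congrFun₂ hA (.inl ()) (.inl ())
  simp [minkowski, Matrix.mul_apply, Fintype.sum_sum_type, fromBlocks, one_apply, ← sq] at h
  linear_combination (-1 : R) * h

theorem Matrix.PreservesForm.eq_fromBlocks_one {C : Matrix (Unit ⊕ n) (Unit ⊕ n) R}
    (hC : PreservesForm (minkowski n R) C) (h₁₁ : C.toBlocks₁₁ = 1) (h₂₁ : C.toBlocks₂₁ = 0) :
    C = fromBlocks 1 0 0 C.toBlocks₂₂ ∧ C.toBlocks₂₂ᵀ * C.toBlocks₂₂ = 1 := by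
  rw [PreservesForm, ← fromBlocks_toBlocks C, h₁₁, h₂₁, minkowski, fromBlocks_transpose,
    fromBlocks_multiply, fromBlocks_multiply] at hC
  obtain ⟨h₁₂, h₂₂⟩ : C.toBlocks₁₂ = 0 ∧ _ := by simpa using hC
  refine ⟨?_, by simpa [h₁₂] using h₂₂⟩
  conv_lhs => rw [← fromBlocks_toBlocks C, h₁₁, h₁₂, h₂₁]

theorem Matrix.PreservesForm.exists_eq_mul_fromBlocks_of_col_eq {M A : Matrix (Unit ⊕ n) (Unit ⊕ n) R}
    (hM : PreservesForm (minkowski n R) M) (hA : PreservesForm (minkowski n R) A)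
    (hMdet : M.det = 1) (hcol : ∀ i, M i (.inl ()) = A i (.inl ())) :
    ∃ Q : Matrix n n R, Qᵀ * Q = 1 ∧ Q.det = A.det ∧ A = M * fromBlocks 1 0 0 Q := by
  have hMinv := hM.mul_mul_transpose_mul_eq_one minkowski_mul_self
  set C := minkowski n R * Mᵀ * minkowski n R * A
  have hMC : M * C = A := by
    rw [← Matrix.mul_assoc, hMinv, Matrix.one_mul]
  have hCcol : ∀ i, C i (.inl ()) = (1 : Matrix (Unit ⊕ n) (Unit ⊕ n) R) i (.inl ()) := by
    intro i
    rw [← mul_eq_one_comm.mp hMinv]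
    simp only [C, Matrix.mul_apply, hcol]
  have hC : PreservesForm (minkowski n R) C := hM.of_mul (hMC ▸ hA)
  obtain ⟨hCQ, hQ⟩ := hC.eq_fromBlocks_one
    (by ext ⟨⟩ ⟨⟩; exact hCcol (.inl ())) (by ext i ⟨⟩; exact hCcol (.inr i))
  refine ⟨C.toBlocks₂₂, hQ, ?_, by rw [← hCQ, hMC]⟩
  rw [← hMC, det_mul, hMdet, one_mul, hCQ]
  simp [det_fromBlocks_zero₂₁]

end Minkowski

theorem exists_norm_eq_one_and_eq_norm_smul {E : Type*} [NormedAddCommGroup E] [NormedSpace ℝ E]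
    [Nontrivial E] (x : E) : ∃ u : E, ‖u‖ = 1 ∧ x = ‖x‖ • u := by
  by_cases hx : x = 0
  · obtain ⟨u, hu⟩ := exists_norm_eq E zero_le_one
    exact ⟨u, hu, by simp [hx]⟩
  · refine ⟨‖x‖⁻¹ • x, norm_smul_inv_norm hx, ?_⟩
    rw [smul_smul, mul_inv_cancel₀ (norm_ne_zero_iff.mpr hx), one_smul]

theorem exists_orthogonal_apply_zero_eq {n : ℕ} (u : EuclideanSpace ℝ (Fin (n + 1)))
    (hu : ‖u‖ = 1) : ∃ R : Matrix (Fin (n + 1)) (Fin (n + 1)) ℝ, Rᵀ * R = 1 ∧ ∀ i, R i 0 = u i := by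
  have hu' : Orthonormal ℝ (({0} : Set (Fin (n + 1))).domRestrict fun _ => u) := by
    rw [orthonormal_iff_ite]
    rintro ⟨i, rfl⟩ ⟨j, rfl⟩
    simp [hu]
  obtain ⟨b, hb⟩ := hu'.exists_orthonormalBasis_extension_of_card_eq (by simp)
  refine ⟨(EuclideanSpace.basisFun _ ℝ).toBasis.toMatrix b, ?_, fun i => ?_⟩
  · simpa using (EuclideanSpace.basisFun _ ℝ).toMatrix_orthonormalBasis_conjTranspose_mul_self b
  · simp [Module.Basis.toMatrix_apply, hb 0 rfl]

theorem exists_specialOrthogonal_apply_zero_eq {n : ℕ} (u : EuclideanSpace ℝ (Fin (n + 2)))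
    (hu : ‖u‖ = 1) :
    ∃ R : Matrix (Fin (n + 2)) (Fin (n + 2)) ℝ, Rᵀ * R = 1 ∧ R.det = 1 ∧ ∀ i, R i 0 = u i := by
  obtain ⟨R, hR, hcol⟩ := exists_orthogonal_apply_zero_eq u hu
  have hdet : R.det ^ 2 = 1 := by
    simpa [sq] using congrArg det hR
  rcases sq_eq_one_iff.mp hdet with hdet | hdet
  · exact ⟨R, hR, hdet, hcol⟩
  set d : Fin (n + 2) → ℝ := Function.update 1 (Fin.last _) (-1)
  refine ⟨R * diagonal d, ?_, ?_, fun i => ?_⟩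
  · rw [transpose_mul, diagonal_transpose, Matrix.mul_assoc, ← Matrix.mul_assoc Rᵀ, hR,
      Matrix.one_mul, diagonal_mul_diagonal, ← diagonal_one]
    congr 1 with i
    by_cases hi : i = Fin.last _ <;> simp [d, hi]
  · simp [d, det_mul, hdet, det_diagonal, Finset.prod_update_of_mem]
  · simp [d, hcol]

theorem boostS_add (a b : ℝ) : boostS a * boostS b = boostS (a + b) := by
  ext (_ | k) (_ | l) <;> try fin_cases k
  all_goals try fin_cases l
  all_goals simp [boostS, Matrix.mul_apply, Fintype.sum_sum_type, Fin.sum_univ_three,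
      Real.cosh_add, Real.sinh_add]
  all_goals ring

theorem preservesForm_boostS (φ : ℝ) : PreservesForm η (boostS φ) := by
  ext (_ | k) (_ | l) <;> try fin_cases k
  all_goals try fin_cases l
  all_goals simp [boostS, η, Matrix.mul_apply, Fintype.sum_sum_type, Fin.sum_univ_three]
  all_goals nlinarith [Real.cosh_sq_sub_sinh_sq φ]

theorem det_boostS (φ : ℝ) : (boostS φ).det = 1 := by
  have hsq : (boostS φ).det ^ 2 = 1 := (preservesForm_boostS φ).det_sq_eq_one (by simp [η])
  have hnonneg : 0 ≤ (boostS φ).det := by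
    rw [← add_halves φ, ← boostS_add, det_mul]
    exact mul_self_nonneg _
  exact (pow_eq_one_iff_of_nonneg hnonneg two_ne_zero).mp hsq

theorem fromBlocks_mul_boostS_apply_inl_inl (R : Matrix (Fin 3) (Fin 3) ℝ) (φ : ℝ) :
    (fromBlocks 1 0 0 R * boostS φ : Matrix (Unit ⊕ Fin 3) (Unit ⊕ Fin 3) ℝ) (.inl ()) (.inl ()) =
      Real.cosh φ := by
  simp [boostS, Matrix.mul_apply, Fintype.sum_sum_type]

theorem fromBlocks_mul_boostS_apply_inr_inl (R : Matrix (Fin 3) (Fin 3) ℝ) (φ : ℝ) (i : Fin 3) :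
    (fromBlocks 1 0 0 R * boostS φ : Matrix (Unit ⊕ Fin 3) (Unit ⊕ Fin 3) ℝ) (.inr i) (.inl ()) =
      R i 0 * Real.sinh φ := by
  simp [boostS, Matrix.mul_apply, Fintype.sum_sum_type]

theorem exists_rotation_boostS_col_eq {A : Matrix (Unit ⊕ Fin 3) (Unit ⊕ Fin 3) ℝ}
    (hA : PreservesForm η A) (horth : 0 < A (.inl ()) (.inl ())) :
    ∃ (φ : ℝ) (R : Matrix (Fin 3) (Fin 3) ℝ), Rᵀ * R = 1 ∧ R.det = 1 ∧
      ∀ i, (fromBlocks 1 0 0 R * boostS φ : Matrix (Unit ⊕ Fin 3) (Unit ⊕ Fin 3) ℝ) i (.inl ()) =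
        A i (.inl ()) := by
  set c : EuclideanSpace ℝ (Fin 3) := WithLp.toLp 2 fun i => A (.inr i) (.inl ())
  obtain ⟨u, hu, hcu⟩ := exists_norm_eq_one_and_eq_norm_smul c
  obtain ⟨R, hR, hRdet, hRu⟩ := exists_specialOrthogonal_apply_zero_eq u hu
  have hc : 1 + ‖c‖ ^ 2 = A (.inl ()) (.inl ()) ^ 2 := by
    rw [EuclideanSpace.norm_sq_eq, hA.apply_inl_inl_sq]
    simp [c]
  refine ⟨Real.arsinh ‖c‖, R, hR, hRdet, ?_⟩
  rintro (_ | i)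
  · rw [fromBlocks_mul_boostS_apply_inl_inl, Real.cosh_arsinh, hc, Real.sqrt_sq horth.le]
  · rw [fromBlocks_mul_boostS_apply_inr_inl, Real.sinh_arsinh, hRu, mul_comm]
    exact (congrArg (· i) hcu).symm

/-- Every restricted Lorentz transformation (characterized as preserving `η`, having
determinant one and being orthochronous) decomposes as `R₁ * A_φ * R₂` with `R₁, R₂`
spatial rotations. -/
theorem lorentz_decomposition (A : Matrix (Unit ⊕ Fin 3) (Unit ⊕ Fin 3) ℝ)
    (hA : Aᵀ * η * A = η) (hdet : A.det = 1) (horth : 0 < A (Sum.inl ()) (Sum.inl ())) :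
    ∃ (φ : ℝ) (R₁ R₂ : Matrix (Fin 3) (Fin 3) ℝ),
      R₁ᵀ * R₁ = 1 ∧ R₁.det = 1 ∧ R₂ᵀ * R₂ = 1 ∧ R₂.det = 1 ∧
      A = Matrix.fromBlocks 1 0 0 R₁ * boostS φ * Matrix.fromBlocks 1 0 0 R₂ := by
  obtain ⟨φ, R₁, hR₁, hR₁det, hcol⟩ := exists_rotation_boostS_col_eq hA horth
  have hM : PreservesForm η (fromBlocks 1 0 0 R₁ * boostS φ) :=
    (preservesForm_minkowski_fromBlocks hR₁).mul (preservesForm_boostS φ)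
  have hMdet : (fromBlocks 1 0 0 R₁ * boostS φ).det = 1 := by
    simp [det_boostS, det_fromBlocks_zero₂₁, hR₁det]
  obtain ⟨R₂, hR₂, hR₂det, hA'⟩ := hM.exists_eq_mul_fromBlocks_of_col_eq hA hMdet hcol
  exact ⟨φ, R₁, R₂, hR₁, hR₁det, hR₂, hR₂det.trans hdet, hA'⟩
end

section
/- Fix m > 0 and φ ∈ ℝ. The map G^φ : ℝ³ × ℝ³ → ℝ³ × ℝ³ sending (x,v) to (y,w), where w := Aˢ_φ(√(m²+|v|²), v), w⁰ := √(m²+|w|²), and y := (x¹(cosh φ - (sinh φ/w⁰) w¹), x² - (sinh φ/w⁰) x¹ w², x³ - (sinh φ/w⁰) x¹ w³), is a C¹ diffeomorphism whose Jacobian determinant is identically 1. -/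
/-!
Write `v⁰ = √(m² + |v|²)` and `w = Aˢ_φ(v⁰, v)`, so that `w⁰ = A⁰_φ(v⁰, v)`. The map is
`G(x, v) = (P_φ(w) x, w)` with `P_φ(w)` lower triangular, so the Jacobian matrix of `G` is block
upper triangular and its determinant is `det P_φ(w) · det (∂w/∂v) = (v⁰/w⁰) · (w⁰/v⁰) = 1`: the
first factor is `A⁰_{-φ}(w⁰, w)/w⁰` and `A_{-φ}` inverts `A_φ`. The same inversion gives
`P_{-φ}(v) P_φ(w) = 1`, so the map for `-φ` is a smooth inverse of the map for `φ`.
-/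

open scoped Matrix

section BlockTriangular

variable {R M N : Type*} [CommRing R]
  [AddCommGroup M] [Module R M] [Module.Free R M] [Module.Finite R M]
  [AddCommGroup N] [Module R N] [Module.Free R N] [Module.Finite R N]

open LinearMap in
theorem LinearMap.det_eq_det_mul_det_of_comp_inl {T : Module.End R (M × N)} {A : Module.End R M}
    (hT : T ∘ₗ inl R M N = inl R M N ∘ₗ A) :
    T.det = A.det * (snd R M N ∘ₗ T ∘ₗ inr R M N).det := by
  let b := Module.Free.chooseBasis R M
  let b' := Module.Free.chooseBasis R N
  have hTb : ∀ j, T (b j, 0) = (A (b j), 0) := fun j => LinearMap.congr_fun hT (b j)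
  have hblocks : toMatrix (b.prod b') (b.prod b') T = Matrix.fromBlocks (toMatrix b b A)
      (Matrix.of fun i l => (b.prod b').repr (T (0, b' l)) (.inl i)) 0
      (toMatrix b' b' (snd R M N ∘ₗ T ∘ₗ inr R M N)) := by
    ext (i | i) (j | j) <;> simp [toMatrix_apply, hTb]
  rw [← det_toMatrix (b.prod b'), hblocks, Matrix.det_fromBlocks_zero₂₁, det_toMatrix,
    det_toMatrix]

end BlockTriangular

section Calculus

variable {𝕜 E F : Type*} [NontriviallyNormedField 𝕜]
  [NormedAddCommGroup E] [NormedSpace 𝕜 E] [NormedAddCommGroup F] [NormedSpace 𝕜 F]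

open ContinuousLinearMap in
theorem det_fderiv_of_fst_eq_of_snd_eq [CompleteSpace 𝕜] [FiniteDimensional 𝕜 E]
    [FiniteDimensional 𝕜 F] {G : E × F → E × F} {g : F → F} {A : E →ₗ[𝕜] E} {x : E} {v : F}
    (hG : DifferentiableAt 𝕜 G (x, v)) (hfst : ∀ x', (G (x', v)).1 = A x')
    (hsnd : ∀ p, (G p).2 = g p.2) :
    LinearMap.det (fderiv 𝕜 G (x, v)).toLinearMap =
      LinearMap.det A * LinearMap.det (fderiv 𝕜 g v).toLinearMap := by
  set A' := LinearMap.toContinuousLinearMap A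
  have hslice : HasFDerivAt (fun x' => G (x', v)) (inl 𝕜 E F ∘L A') x := by
    have h : (fun x' => G (x', v)) = fun x' => (inl 𝕜 E F ∘L A') x' + (0, g v) := by
      funext x'; ext <;> simp [A', hfst, hsnd]
    rw [h]
    exact (inl 𝕜 E F ∘L A').hasFDerivAt.add_const _
  have hinl := (hG.hasFDerivAt.comp x (hasFDerivAt_prodMk_left x v)).unique hslice
  have hg : HasFDerivAt g (snd 𝕜 E F ∘L fderiv 𝕜 G (x, v) ∘L inr 𝕜 E F) v := by
    have h : g = fun v' => (G (x, v')).2 := funext fun v' => (hsnd (x, v')).symm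
    rw [h]
    exact hasFDerivAt_snd.comp v (hG.hasFDerivAt.comp v (hasFDerivAt_prodMk_right x v))
  rw [hg.fderiv]
  exact LinearMap.det_eq_det_mul_det_of_comp_inl (congr_arg ContinuousLinearMap.toLinearMap hinl)

theorem ContDiff.matrix_mulVec {ι κ : Type*} [Fintype ι] [Fintype κ] {n : WithTop ℕ∞}
    {M : E → Matrix ι κ 𝕜} {x : E → κ → 𝕜}
    (hM : ∀ i j, ContDiff 𝕜 n fun e => M e i j) (hx : ContDiff 𝕜 n x) :
    ContDiff 𝕜 n fun e => M e *ᵥ x e :=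
  contDiff_pi.2 fun i => ContDiff.sum fun j _ => (hM i j).mul (contDiff_pi.1 hx j)

end Calculus

open Real

namespace MassShell

noncomputable section

def energy (m : ℝ) (v : Fin 3 → ℝ) : ℝ := √(m ^ 2 + ∑ k, v k ^ 2)

variable {m : ℝ}

theorem energy_sq (v : Fin 3 → ℝ) : energy m v ^ 2 = m ^ 2 + v 0 ^ 2 + v 1 ^ 2 + v 2 ^ 2 := by
  rw [energy, sq_sqrt (by positivity), Fin.sum_univ_three]; ring

theorem energy_pos (hm : 0 < m) (v : Fin 3 → ℝ) : 0 < energy m v :=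
  sqrt_pos.2 (by positivity)

theorem abs_lt_energy (hm : 0 < m) (v : Fin 3 → ℝ) : |v 0| < energy m v := by
  rw [← sqrt_sq_eq_abs, energy]
  gcongr
  rw [Fin.sum_univ_three]
  nlinarith [sq_nonneg (v 1), sq_nonneg (v 2)]

theorem contDiff_energy (hm : 0 < m) {n : WithTop ℕ∞} : ContDiff ℝ n (energy m) :=
  ContDiff.sqrt (by fun_prop) fun v => (sqrt_pos.1 (energy_pos hm v)).ne'

theorem hasFDerivAt_energy (hm : 0 < m) (v : Fin 3 → ℝ) :
    HasFDerivAt (energy m)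
      (∑ k, (v k / energy m v) • (ContinuousLinearMap.proj k : (Fin 3 → ℝ) →L[ℝ] ℝ)) v := by
  have hsq : ∀ k, HasFDerivAt (fun u : Fin 3 → ℝ => u k ^ 2)
      ((2 * v k) • (ContinuousLinearMap.proj k : (Fin 3 → ℝ) →L[ℝ] ℝ)) v := fun k => by
    simpa using (hasFDerivAt_apply (𝕜 := ℝ) k v).pow 2
  have hq := (HasFDerivAt.sum fun k (_ : k ∈ Finset.univ) => hsq k).const_add (m ^ 2)
  refine (hq.sqrt (sqrt_pos.1 (energy_pos hm v)).ne').congr_fderiv ?_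
  ext u
  simp only [energy, smul_apply, FunLike.coe_sum,
    Finset.sum_apply, ContinuousLinearMap.proj_apply, smul_eq_mul, Finset.mul_sum]
  refine Finset.sum_congr rfl fun k _ => ?_
  field_simp

def boost (m φ : ℝ) (v : Fin 3 → ℝ) : Fin 3 → ℝ :=
  ![energy m v * sinh φ + v 0 * cosh φ, v 1, v 2]

@[simp] theorem boost_apply_one (φ : ℝ) (v : Fin 3 → ℝ) : boost m φ v 1 = v 1 := rfl

@[simp] theorem boost_apply_two (φ : ℝ) (v : Fin 3 → ℝ) : boost m φ v 2 = v 2 := rfl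

theorem energy_mul_cosh_add_pos (hm : 0 < m) (φ : ℝ) (v : Fin 3 → ℝ) :
    0 < energy m v * cosh φ + v 0 * sinh φ := by
  have hs : |sinh φ| ≤ cosh φ := by rw [abs_sinh, ← cosh_abs]; exact (sinh_lt_cosh _).le
  calc 0 < (energy m v - |v 0|) * cosh φ := mul_pos (sub_pos.2 (abs_lt_energy hm v)) (cosh_pos φ)
    _ ≤ energy m v * cosh φ - |v 0 * sinh φ| := by
      rw [abs_mul, sub_mul]; gcongr
    _ ≤ energy m v * cosh φ + v 0 * sinh φ := by linarith [neg_abs_le (v 0 * sinh φ)]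

theorem energy_boost (hm : 0 < m) (φ : ℝ) (v : Fin 3 → ℝ) :
    energy m (boost m φ v) = energy m v * cosh φ + v 0 * sinh φ := by
  refine (sq_eq_sq₀ (energy_pos hm _).le (energy_mul_cosh_add_pos hm φ v).le).1 ?_
  rw [energy_sq]
  simp only [boost, Matrix.cons_val_zero, Matrix.cons_val_one, Matrix.cons_val_two,
    Matrix.head_cons, Matrix.tail_cons]
  linear_combination (v 0 ^ 2 - energy m v ^ 2) * cosh_sq_sub_sinh_sq φ - energy_sq v

theorem boost_neg_boost (hm : 0 < m) (φ : ℝ) (v : Fin 3 → ℝ) :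
    boost m (-φ) (boost m φ v) = v := by
  rw [boost, energy_boost hm]
  ext i
  fin_cases i <;> simp [boost]
  linear_combination v 0 * cosh_sq_sub_sinh_sq φ

theorem cosh_add_sinh_mul_div_energy (hm : 0 < m) (φ : ℝ) (v : Fin 3 → ℝ) :
    cosh φ + sinh φ * v 0 / energy m v = energy m (boost m φ v) / energy m v := by
  rw [energy_boost hm]
  field_simp [(energy_pos hm v).ne']

theorem contDiff_boost (hm : 0 < m) (φ : ℝ) {n : WithTop ℕ∞} : ContDiff ℝ n (boost m φ) := by
  rw [contDiff_pi]
  intro i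
  fin_cases i
  · exact ((contDiff_energy hm).mul contDiff_const).add ((contDiff_apply ℝ ℝ 0).mul contDiff_const)
  · exact contDiff_apply ℝ ℝ 1
  · exact contDiff_apply ℝ ℝ 2

def boostJacobian (m φ : ℝ) (v : Fin 3 → ℝ) : Matrix (Fin 3) (Fin 3) ℝ :=
  !![cosh φ + sinh φ * v 0 / energy m v, sinh φ * v 1 / energy m v, sinh φ * v 2 / energy m v;
    0, 1, 0;
    0, 0, 1]

theorem hasFDerivAt_boost (hm : 0 < m) (φ : ℝ) (v : Fin 3 → ℝ) :
    HasFDerivAt (boost m φ)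
      (LinearMap.toContinuousLinearMap (Matrix.toLin' (boostJacobian m φ v))) v := by
  have hcoord : ∀ i, HasFDerivAt (fun u : Fin 3 → ℝ => u i)
      (ContinuousLinearMap.proj i : (Fin 3 → ℝ) →L[ℝ] ℝ) v := fun i => hasFDerivAt_apply i v
  rw [hasFDerivAt_pi']
  intro i
  fin_cases i
  · refine (((hasFDerivAt_energy hm v).mul_const (sinh φ)).add
      ((hcoord 0).mul_const (cosh φ))).congr_fderiv ?_
    ext u
    simp [boostJacobian, dotProduct, Fin.sum_univ_three]
    ring
  · refine (hcoord 1).congr_fderiv ?_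
    ext u
    simp [boostJacobian, dotProduct, Fin.sum_univ_three]
  · refine (hcoord 2).congr_fderiv ?_
    ext u
    simp [boostJacobian, dotProduct, Fin.sum_univ_three]

theorem det_boostJacobian (hm : 0 < m) (φ : ℝ) (v : Fin 3 → ℝ) :
    (boostJacobian m φ v).det = energy m (boost m φ v) / energy m v := by
  simp [boostJacobian, Matrix.det_fin_three, cosh_add_sinh_mul_div_energy hm]

def positionMatrix (m φ : ℝ) (w : Fin 3 → ℝ) : Matrix (Fin 3) (Fin 3) ℝ :=
  !![cosh φ - sinh φ / energy m w * w 0, 0, 0;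
    -(sinh φ / energy m w * w 1), 1, 0;
    -(sinh φ / energy m w * w 2), 0, 1]

theorem det_positionMatrix (φ : ℝ) (w : Fin 3 → ℝ) :
    (positionMatrix m φ w).det = positionMatrix m φ w 0 0 := by
  simp [positionMatrix, Matrix.det_fin_three]

theorem positionMatrix_boost_zero_zero (hm : 0 < m) (φ : ℝ) (v : Fin 3 → ℝ) :
    positionMatrix m φ (boost m φ v) 0 0 = energy m v / energy m (boost m φ v) := by
  have h := cosh_add_sinh_mul_div_energy hm (-φ) (boost m φ v)
  rw [boost_neg_boost hm, cosh_neg, sinh_neg] at h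
  simp [positionMatrix, ← h]
  ring

theorem positionMatrix_neg_mul (hm : 0 < m) (φ : ℝ) (v : Fin 3 → ℝ) :
    positionMatrix m (-φ) v * positionMatrix m φ (boost m φ v) = 1 := by
  have h := positionMatrix_boost_zero_zero hm φ v
  have h' : positionMatrix m (-φ) v 0 0 = energy m (boost m φ v) / energy m v := by
    simp [positionMatrix, ← cosh_add_sinh_mul_div_energy hm]
    ring
  have hE := (energy_pos hm v).ne'
  have hW := (energy_pos hm (boost m φ v)).ne'
  ext i j
  fin_cases i <;> fin_cases j <;> simp [Matrix.mul_apply, Fin.sum_univ_three, h, h'] <;>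
    simp [positionMatrix] <;> field_simp <;> ring

theorem contDiff_positionMatrix_apply (hm : 0 < m) (φ : ℝ) {n : WithTop ℕ∞} (i j : Fin 3) :
    ContDiff ℝ n fun w => positionMatrix m φ w i j := by
  have hE := contDiff_energy hm (n := n)
  have hE' : ∀ w, energy m w ≠ 0 := fun w => (energy_pos hm w).ne'
  fin_cases i <;> fin_cases j <;> simp [positionMatrix] <;> fun_prop (disch := exact hE')

def phaseMap (m φ : ℝ) (p : (Fin 3 → ℝ) × (Fin 3 → ℝ)) : (Fin 3 → ℝ) × (Fin 3 → ℝ) :=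
  (positionMatrix m φ (boost m φ p.2) *ᵥ p.1, boost m φ p.2)

theorem phaseMap_apply (φ : ℝ) (x v : Fin 3 → ℝ) :
    phaseMap m φ (x, v) =
      (![x 0 * (cosh φ - sinh φ / energy m (boost m φ v) * boost m φ v 0),
        x 1 - sinh φ / energy m (boost m φ v) * x 0 * v 1,
        x 2 - sinh φ / energy m (boost m φ v) * x 0 * v 2], boost m φ v) := by
  ext i <;> fin_cases i <;> simp [phaseMap, positionMatrix, dotProduct, Fin.sum_univ_three] <;> ring

theorem contDiff_phaseMap (hm : 0 < m) (φ : ℝ) {n : WithTop ℕ∞} : ContDiff ℝ n (phaseMap m φ) :=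
  have hboost : ContDiff ℝ n fun p : (Fin 3 → ℝ) × (Fin 3 → ℝ) => boost m φ p.2 :=
    (contDiff_boost hm φ).comp contDiff_snd
  (ContDiff.matrix_mulVec (fun i j => (contDiff_positionMatrix_apply hm φ i j).comp hboost)
    contDiff_fst).prodMk hboost

theorem phaseMap_neg_phaseMap (hm : 0 < m) (φ : ℝ) (p : (Fin 3 → ℝ) × (Fin 3 → ℝ)) :
    phaseMap m (-φ) (phaseMap m φ p) = p := by
  simp [phaseMap, boost_neg_boost hm, Matrix.mulVec_mulVec, positionMatrix_neg_mul hm]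

theorem det_fderiv_phaseMap (hm : 0 < m) (φ : ℝ) (p : (Fin 3 → ℝ) × (Fin 3 → ℝ)) :
    LinearMap.det (fderiv ℝ (phaseMap m φ) p).toLinearMap = 1 := by
  obtain ⟨x, v⟩ := p
  rw [det_fderiv_of_fst_eq_of_snd_eq (g := boost m φ)
    (A := Matrix.toLin' (positionMatrix m φ (boost m φ v)))
    ((contDiff_phaseMap hm φ (n := 1)).differentiable one_ne_zero _) (fun _ => rfl) (fun _ => rfl),
    (hasFDerivAt_boost hm φ v).fderiv, LinearMap.coe_toContinuousLinearMap, LinearMap.det_toLin',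
    LinearMap.det_toLin', det_positionMatrix, positionMatrix_boost_zero_zero hm,
    det_boostJacobian hm, div_mul_div_cancel₀ (energy_pos hm _).ne', div_self (energy_pos hm v).ne']

end

end MassShell

/-- The phase-space change of variables associated to the Lorentz boost `A_φ` on the
mass-`m` shell is a `C¹` diffeomorphism with Jacobian determinant identically `1`. -/
theorem Gphi_diffeomorphism_jacobian_one (m : ℝ) (hm : 0 < m) (φ : ℝ) :
    let wmap : (Fin 3 → ℝ) → (Fin 3 → ℝ) := fun v =>
      ![Real.sqrt (m ^ 2 + ∑ k : Fin 3, (v k) ^ 2) * Real.sinh φ + v 0 * Real.cosh φ,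
        v 1, v 2]
    let G : (Fin 3 → ℝ) × (Fin 3 → ℝ) → (Fin 3 → ℝ) × (Fin 3 → ℝ) := fun p =>
      let w := wmap p.2
      let w0 := Real.sqrt (m ^ 2 + ∑ k : Fin 3, (w k) ^ 2)
      (![p.1 0 * (Real.cosh φ - (Real.sinh φ / w0) * w 0),
         p.1 1 - (Real.sinh φ / w0) * p.1 0 * w 1,
         p.1 2 - (Real.sinh φ / w0) * p.1 0 * w 2], w)
    ∃ Ginv : (Fin 3 → ℝ) × (Fin 3 → ℝ) → (Fin 3 → ℝ) × (Fin 3 → ℝ),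
      ContDiff ℝ 1 G ∧ ContDiff ℝ 1 Ginv ∧
      Function.LeftInverse Ginv G ∧ Function.RightInverse Ginv G ∧
      ∀ p, LinearMap.det (fderiv ℝ G p).toLinearMap = 1 := by
  intro wmap G
  have hG : G = MassShell.phaseMap m φ := funext fun p => (MassShell.phaseMap_apply φ p.1 p.2).symm
  rw [hG]
  refine ⟨MassShell.phaseMap m (-φ), MassShell.contDiff_phaseMap hm φ,
    MassShell.contDiff_phaseMap hm (-φ), MassShell.phaseMap_neg_phaseMap hm φ, fun p => ?_,
    MassShell.det_fderiv_phaseMap hm φ⟩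
  simpa only [neg_neg] using MassShell.phaseMap_neg_phaseMap hm (-φ) p
end
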